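/- arXiv:1707.06279 — 4 statements merged into one kernel-verified Lean document; each statement's English description precedes it below -/
import Mathlib

section
/- Let H be a function on trees (modeling a hash) that is injective on the set of all trees (modeling collision resistance as an idealized assumption). If two content-addressable stores (finite maps from hash values to nodes, where each key equals H of its value) both resolve a root hash r and a lookup key k to leaves, then the resolved values are equal. That is, under injectivity of H, the unique-resolution game of Experiment 1 cannot be won: QueryTree(r, k, store) = QueryTree(r, k, store') whenever both succeed. -/
/-- A node of a hash-based key-value Merkle tree: either a leaf with a key and
a value, or an internal node with a pivot and the hashes of its children. -/
inductive HNode (K V Hv : Type) where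
  | leaf (k : K) (v : V)
  | node (pivot : K) (hl hr : Hv)

/-- A content-addressable store is valid for a hash function `H` if every
stored node hashes to its lookup key. -/
def ValidStore {K V Hv : Type} (H : HNode K V Hv → Hv)
    (σ : Hv → Option (HNode K V Hv)) : Prop :=
  ∀ h n, σ h = some n → H n = h

/-- Query the tree with root hash `r` for lookup key `k`, resolving node
hashes through the store `σ`; `fuel` bounds the recursion depth; fails on any
lookup miss or on a key mismatch at the leaf. -/
def queryTree {K V Hv : Type} [LinearOrder K]
    (σ : Hv → Option (HNode K V Hv)) (k : K) : ℕ → Hv → Option V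
  | 0, _ => none
  | fuel + 1, r =>
      match σ r with
      | none => none
      | some (.leaf k' v) => if k' = k then some v else none
      | some (.node p hl hr) =>
          if k < p then queryTree σ k fuel hl else queryTree σ k fuel hr

/-- Under injectivity of the hash function `H` (idealized
collision resistance), two valid content-addressable stores that both resolve
the same root hash `r` and lookup key `k` to a value resolve it to the same
value: the unique-resolution game cannot be won. -/
theorem unique_resolution_stores {K V Hv : Type} [LinearOrder K]
    (H : HNode K V Hv → Hv) (hinj : Function.Injective H)
    (σ σ' : Hv → Option (HNode K V Hv))
    (hσ : ValidStore H σ) (hσ' : ValidStore H σ')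
    (r : Hv) (k : K) (fuel fuel' : ℕ) (v v' : V)
    (hq : queryTree σ k fuel r = some v)
    (hq' : queryTree σ' k fuel' r = some v') :
    v = v' := by
  induction fuel generalizing fuel' r with
  | zero => simp [queryTree] at hq
  | succ n ih =>
    cases fuel' with
    | zero => simp [queryTree] at hq'
    | succ m =>
      unfold queryTree at hq hq'
      cases h1 : σ r with
      | none => rw [h1] at hq; simp at hq
      | some nd =>
        cases h2 : σ' r with
        | none => rw [h2] at hq'; simp at hq'
        | some nd' =>
          have hnd : nd = nd' := hinj (by rw [hσ r nd h1, hσ' r nd' h2])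
          subst hnd
          rw [h1] at hq; rw [h2] at hq'
          cases nd with
          | leaf k' w =>
            simp at hq hq'
            rw [← hq.2, ← hq'.2]
          | node p hl hr =>
            simp at hq hq'
            by_cases hk : k < p
            · rw [if_pos hk] at hq hq'; exact ih _ _ hq hq'
            · rw [if_neg hk] at hq hq'; exact ih _ _ hq hq'
end

section
/- The Pedersen commitment scheme Com(r, m) = g₁^r · g₂^m over a cyclic group G of prime order q with generators g₁, g₂ is binding relative to the discrete logarithm of g₂ base g₁: if Com(r, m) = Com(r', m') with m ≠ m' (as elements of ZMod q), then the discrete logarithm x of g₂ with respect to g₁ can be computed as x = (r − r') · (m' − m)⁻¹ in ZMod q, i.e., g₂ = g₁^((r − r')·(m' − m)⁻¹). -/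
private lemma zpow_eq_pow_val {G : Type} [CommGroup G] [Fintype G]
    (q : ℕ) [Fact (Nat.Prime q)] (hcard : Fintype.card G = q)
    (g : G) (n : ℤ) : g ^ n = g ^ ((n : ZMod q)).val := by
  have hq : g ^ (q : ℤ) = 1 := by
    have h : g ^ Fintype.card G = 1 := pow_card_eq_one
    rw [hcard] at h
    exact_mod_cast (zpow_natCast g q).trans h
  have h2 : ((n - ((n : ZMod q)).val : ℤ) : ZMod q) = 0 := by
    push_cast
    simp
  obtain ⟨k, hk⟩ := (ZMod.intCast_zmod_eq_zero_iff_dvd _ q).mp h2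
  have hn : n = (((n : ZMod q)).val : ℤ) + q * k := by linarith
  conv_lhs => rw [hn]
  rw [zpow_add, zpow_natCast, zpow_mul, hq, one_zpow, mul_one]

/-- Pedersen binding relative to the discrete log of g₂ base g₁:
if Com(r, m) = Com(r', m') with m ≠ m' in ZMod q, then
g₂ = g₁^((r − r')·(m' − m)⁻¹). -/
theorem pedersen_binding_dlog
    {G : Type} [CommGroup G] [Fintype G]
    (q : ℕ) [Fact (Nat.Prime q)] (hcard : Fintype.card G = q)
    (g₁ g₂ : G) (hgen : ∀ x : G, x ∈ Subgroup.zpowers g₁)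
    (r r' m m' : ZMod q) (hm : m ≠ m')
    (hcom : g₁ ^ r.val * g₂ ^ m.val = g₁ ^ r'.val * g₂ ^ m'.val) :
    g₂ = g₁ ^ ((r - r') * (m' - m)⁻¹).val := by
  obtain ⟨k, hk⟩ := Subgroup.mem_zpowers_iff.mp (hgen g₂)
  subst hk
  have key : ∀ n : ℤ, g₁ ^ n = g₁ ^ ((n : ZMod q)).val :=
    zpow_eq_pow_val q hcard g₁
  have hcom' : g₁ ^ (((r.val : ℤ) + k * m.val : ℤ)) = g₁ ^ (((r'.val : ℤ) + k * m'.val : ℤ)) := by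
    rw [zpow_add, zpow_add, zpow_mul, zpow_mul, zpow_natCast, zpow_natCast,
      zpow_natCast, zpow_natCast]
    exact hcom
  have horder : orderOf g₁ = q := by rw [orderOf_eq_card_of_forall_mem_zpowers hgen, Nat.card_eq_fintype_card, hcard]
  have hdvd : (q : ℤ) ∣ ((r.val : ℤ) + k * m.val) - ((r'.val : ℤ) + k * m'.val) := by
    have h1 : g₁ ^ (((r.val : ℤ) + k * m.val) - ((r'.val : ℤ) + k * m'.val)) = 1 := by
      rw [zpow_sub, hcom', mul_inv_cancel]
    have := orderOf_dvd_iff_zpow_eq_one.mpr h1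
    rwa [horder] at this
  have hzm : (r : ZMod q) + (k : ZMod q) * m = r' + (k : ZMod q) * m' := by
    have := (ZMod.intCast_zmod_eq_zero_iff_dvd _ q).mpr hdvd
    push_cast at this
    simp [ZMod.natCast_val] at this
    linear_combination this
  have hmm : (m' - m : ZMod q) ≠ 0 := sub_ne_zero.mpr (Ne.symm hm)
  have hkeq : (k : ZMod q) = (r - r') * (m' - m)⁻¹ := by
    field_simp
    linear_combination -hzm
  rw [key k, hkeq]
end

section
/- Soundness of the non-equivocation argument via VRF uniqueness and tree unique-resolution: assume H is injective on tree nodes, the VRF is unique (a fixed public key determines at most one valid VRF hash h per label), and H₁ is injective on VRF hashes. If two readers query the same block (containing a Merkle root MTR and nonce n) with the same label l, each derives a claim lookup key i = H₁(h) from a VRF hash h accompanied by a valid correctness witness relative to the block's VRF public key, and each successfully retrieves a claim from the tree rooted at MTR, then both readers retrieve the same encoded claim. (Intra-block non-equivocation at the structural level.) -/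
theorem queryTree_unique {Kt V Hv : Type} [LinearOrder Kt]
    (H : HNode Kt V Hv → Hv) (hHinj : Function.Injective H)
    (σ₁ σ₂ : Hv → Option (HNode Kt V Hv))
    (hσ₁ : ValidStore H σ₁) (hσ₂ : ValidStore H σ₂) (k : Kt) :
    ∀ (f₁ : ℕ), ∀ (f₂ : ℕ) (r : Hv) (c₁ c₂ : V),
      queryTree σ₁ k f₁ r = some c₁ → queryTree σ₂ k f₂ r = some c₂ → c₁ = c₂ := by
  intro f₁
  induction f₁ with
  | zero => intro f₂ r c₁ c₂ h1; simp [queryTree] at h1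
  | succ f ih =>
    intro f₂ r c₁ c₂ h1 h2
    cases f₂ with
    | zero => simp [queryTree] at h2
    | succ f₂ =>
      simp only [queryTree] at h1 h2
      cases e1 : σ₁ r with
      | none => rw [e1] at h1; simp at h1
      | some n₁ =>
        cases e2 : σ₂ r with
        | none => rw [e2] at h2; simp at h2
        | some n₂ =>
          have hn : n₁ = n₂ := hHinj ((hσ₁ r n₁ e1).trans (hσ₂ r n₂ e2).symm)
          subst hn
          rw [e1] at h1; rw [e2] at h2
          cases n₁ with
          | leaf k' v =>
            simp only at h1 h2
            by_cases hk : k' = k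
            · rw [if_pos hk] at h1 h2
              rw [Option.some_inj] at h1 h2; rw [← h1, ← h2]
            · rw [if_neg hk] at h1; exact absurd h1 (by simp)
          | node p hl hr =>
            simp only at h1 h2
            split at h1 <;> split at h2 <;> first
              | exact ih f₂ _ _ _ h1 h2
              | exact absurd ‹k < p› ‹¬k < p›

/-- Structural intra-block non-equivocation. Assume the node
hash H is injective, the VRF is unique (a fixed public key pk = g^sk in a
cyclic group of prime order determines at most one valid VRF hash per label),
and the lookup-key derivation H₁ is injective. If two readers query the same
block (VRF public key pk, nonce n, Merkle root MTR) with the same label l,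
each derives a lookup key i = H₁(h) from a VRF hash h valid w.r.t. pk, and
each successfully retrieves a claim from the tree rooted at MTR through a
valid store, then both readers retrieve the same encoded claim. -/
theorem intra_block_non_equivocation
    {G : Type} [CommGroup G] [Fintype G]
    (q : ℕ) [Fact (Nat.Prime q)] (hcard : Fintype.card G = q)
    (g : G) (hgen : ∀ x : G, x ∈ Subgroup.zpowers g)
    (HG : String → G)
    {Kt V Hv : Type} [LinearOrder Kt]
    (H : HNode Kt V Hv → Hv) (hHinj : Function.Injective H)
    (H₁ : G → Kt) (hH₁inj : Function.Injective H₁)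
    (pk : G) (nonce : String) (MTR : Hv) (l : String)
    -- reader 1: a VRF hash valid w.r.t. pk, and a successful retrieval
    (sk₁ : ZMod q) (h₁ : G) (hpk₁ : g ^ sk₁.val = pk)
    (hh₁ : h₁ = HG (l ++ nonce) ^ sk₁.val)
    (σ₁ : Hv → Option (HNode Kt V Hv)) (hσ₁ : ValidStore H σ₁)
    (fuel₁ : ℕ) (c₁ : V) (hq₁ : queryTree σ₁ (H₁ h₁) fuel₁ MTR = some c₁)
    -- reader 2: likewise
    (sk₂ : ZMod q) (h₂ : G) (hpk₂ : g ^ sk₂.val = pk)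
    (hh₂ : h₂ = HG (l ++ nonce) ^ sk₂.val)
    (σ₂ : Hv → Option (HNode Kt V Hv)) (hσ₂ : ValidStore H σ₂)
    (fuel₂ : ℕ) (c₂ : V) (hq₂ : queryTree σ₂ (H₁ h₂) fuel₂ MTR = some c₂) :
    c₁ = c₂ := by
  have ho : orderOf g = q := by
    rw [← hcard, ← Nat.card_eq_fintype_card]
    exact orderOf_eq_card_of_forall_mem_zpowers hgen
  have hsk : sk₁ = sk₂ := by
    have h := hpk₁.trans hpk₂.symm
    have := (pow_eq_pow_iff_modEq).mp h
    rw [ho] at this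
    exact ZMod.val_injective q (Nat.ModEq.eq_of_lt_of_lt this sk₁.val_lt sk₂.val_lt)
  have hh : h₁ = h₂ := by rw [hh₁, hh₂, hsk]
  rw [hh] at hq₁
  exact queryTree_unique H hHinj σ₁ σ₂ hσ₁ hσ₂ (H₁ h₂) fuel₁ fuel₂ MTR c₁ c₂ hq₁ hq₂
end

section
/- Special soundness of the Schnorr protocol: given two accepting transcripts (R, c, s) and (R, c', s') for the same commitment R and public key pk = g^x with c ≠ c', i.e., g^s = R · pk^c and g^{s'} = R · pk^{c'}, the witness x can be extracted as x = (s − s')·(c − c')⁻¹ in ZMod q, meaning g^{(s − s')·(c − c')⁻¹} = pk. -/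
/-- Special soundness of the Schnorr protocol: from two
accepting transcripts (R, c, s) and (R, c', s') with the same commitment R and
c ≠ c', i.e. g^s = R · pk^c and g^{s'} = R · pk^{c'}, the witness is extracted
as x = (s − s')·(c − c')⁻¹, meaning g^x = pk. -/
theorem schnorr_special_soundness
    {G : Type} [CommGroup G] [Fintype G]
    (q : ℕ) [Fact (Nat.Prime q)] (hcard : Fintype.card G = q)
    (g pk R : G) (c c' s s' : ZMod q) (hne : c ≠ c')
    (hacc : g ^ s.val = R * pk ^ c.val)
    (hacc' : g ^ s'.val = R * pk ^ c'.val) :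
    g ^ (((s - s') * (c - c')⁻¹).val) = pk := by
  have hq : ∀ a : G, a ^ q = 1 := fun a => by rw [← hcard]; exact pow_card_eq_one
  have key : ∀ (a : G) (m n : ℕ), (m : ZMod q) = (n : ZMod q) → a ^ m = a ^ n := by
    intro a m n h
    rw [pow_eq_pow_mod m (hq a), pow_eq_pow_mod n (hq a),
      (ZMod.natCast_eq_natCast_iff' m n q).mp h]
  set d := (c - c')⁻¹ with hdef
  have hd : (c - c') * d = 1 := mul_inv_cancel₀ (sub_ne_zero.mpr hne)
  have h1 : g ^ s.val * pk ^ c'.val = g ^ s'.val * pk ^ c.val := by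
    rw [hacc, hacc', mul_right_comm]
  have h2 : g ^ (s.val * d.val) * pk ^ (c'.val * d.val)
      = g ^ (s'.val * d.val) * pk ^ (c.val * d.val) := by
    have := congrArg (· ^ d.val) h1
    simpa [mul_pow, ← pow_mul] using this
  have h3 : g ^ (s.val * d.val) = g ^ (((s - s') * d).val + s'.val * d.val) := by
    apply key
    push_cast [ZMod.natCast_val, ZMod.cast_id]
    ring
  have h4 : pk ^ (c.val * d.val) = pk ^ (1 + c'.val * d.val) := by
    apply key
    push_cast [ZMod.natCast_val, ZMod.cast_id]
    linear_combination hd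
  rw [h3, h4, pow_add, pow_add, pow_one] at h2
  have h5 : g ^ (((s - s') * d).val) * (g ^ (s'.val * d.val) * pk ^ (c'.val * d.val))
      = pk * (g ^ (s'.val * d.val) * pk ^ (c'.val * d.val)) := by
    rw [← mul_assoc, h2, mul_left_comm]
  exact mul_right_cancel h5
end
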